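/- Let G be a saturated nonhamiltonian graph on n vertices, and suppose for some k ≥ 2 the number of k-cliques of G exceeds binomial(n - ⌊(n-1)/2⌋, k) + ⌊(n-1)/2⌋·binomial(⌊(n-1)/2⌋, k-1). Then for some 1 ≤ r ≤ ⌊(n-1)/2⌋, V(G) contains a subset D of r vertices of degree at most r such that G - D is a complete graph. -/

import Mathlib

/-- A graph is saturated if it is nonhamiltonian but adding any missing edge
creates a Hamiltonian cycle. -/
def SaturatedNonhamiltonian {V : Type*} [Fintype V] [DecidableEq V] (G : SimpleGraph V) : Prop :=
  ¬ G.IsHamiltonian ∧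
    ∀ u v : V, u ≠ v → ¬ G.Adj u v → (G ⊔ SimpleGraph.edge u v).IsHamiltonian

/-!
In a saturated graph on `n` vertices, nonadjacent vertices `u ≠ v` satisfy
`deg u + deg v < n`: a Hamiltonian cycle of `G + uv` must use `uv`, so `G` has a Hamiltonian
path `u = p₀, …, pₙ₋₁ = v`, and if `deg u + deg v ≥ n` some `i` has `u ~ pᵢ₊₁` and `pᵢ ~ v`
(pigeonhole), which closes the path into a Hamiltonian cycle of `G` (Ore's crossing argument).

Let `m = ⌊(n-1)/2⌋` and `D` the set of vertices of degree at most `m`. Two vertices outside `D`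
have degree sum `> n - 1`, so `G - D` is complete; as `G` is not Hamiltonian, `D ≠ ∅`. A vertex
`v ∈ D` misses some `u ∉ D`, and `deg u ≥ n - 1 - |D|` gives `deg v ≤ |D|`. Finally, if
`|D| > m`, take `m + 1` vertices of `D`: every `k`-clique either avoids them or contains one of
them together with `k - 1` of its neighbours, so there are at most
`C(n-m-1, k) + (m+1)·C(m, k-1) ≤ C(n-m, k) + m·C(m, k-1)` of them, by Pascal's rule and
`m ≤ n - m - 1`.
-/

open Finset

namespace SimpleGraph.Walk

variable {V : Type*} {G : SimpleGraph V} {u v : V}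

theorem IsCycle.snd_eq_or_penultimate_eq_of_mem_edges {c : G.Walk u u} (hc : c.IsCycle)
    (h : s(u, v) ∈ c.edges) : c.snd = v ∨ c.penultimate = v := by
  cases c with
  | nil => exact absurd hc not_isCycle_nil
  | cons hadj q =>
    rw [edges_cons, List.mem_cons, Sym2.eq_iff] at h
    rcases h with (⟨-, hv⟩ | ⟨hu, -⟩) | h
    · exact Or.inl (by simp [hv])
    · exact absurd (hu ▸ hadj) G.irrefl
    · have hq := (cons_isCycle_iff q hadj).mp hc
      rw [penultimate_cons_of_not_nil _ _ (not_nil_of_isCycle_cons hc)]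
      exact Or.inr (hq.1.eq_penultimate_of_mem_edges h).symm

variable [Fintype V] [DecidableEq V]

theorem IsHamiltonian.isHamiltonian_of_adj {p : G.Walk u v} (hp : p.IsHamiltonian)
    (h : G.Adj v u) (h3 : 3 ≤ Fintype.card V) : G.IsHamiltonian := by
  refine fun _ => ⟨v, cons h p, isHamiltonianCycle_iff_isCycle_and_length_eq.mpr ⟨?_, ?_⟩⟩
  · refine (cons_isCycle_iff p h).mpr ⟨hp.isPath, fun he => ?_⟩
    have := hp.isPath.length_eq_one_of_mem_edges (Sym2.eq_swap ▸ he)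
    have := hp.length_eq
    omega
  · have := hp.length_eq
    simp only [length_cons]
    omega

theorem IsHamiltonian.card_filter_adj_getVert {p : G.Walk u v} (hp : p.IsHamiltonian)
    [DecidableRel G.Adj] (w : V) :
    #{i ∈ range (p.length + 1) | G.Adj w (p.getVert i)} = G.degree w := by
  rw [← card_neighborFinset_eq_degree, ← card_image_of_injOn (f := p.getVert)]
  · congr 1
    ext x
    simp only [mem_image, mem_filter, mem_range, mem_neighborFinset]
    constructor
    · rintro ⟨i, ⟨-, hi⟩, rfl⟩
      exact hi
    · intro hx
      obtain ⟨i, rfl, hi⟩ := mem_support_iff_exists_getVert.mp (hp.mem_support x)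
      exact ⟨i, ⟨by omega, hx⟩, rfl⟩
  · intro i hi j hj hij
    simp only [coe_filter, mem_range, Set.mem_ofPred_eq] at hi hj
    exact hp.isPath.getVert_injOn (by simp; omega) (by simp; omega) hij

theorem IsHamiltonian.exists_adj_getVert_succ_of_card_le {p : G.Walk u v}
    (hp : p.IsHamiltonian) [DecidableRel G.Adj]
    (hdeg : Fintype.card V ≤ G.degree u + G.degree v) :
    ∃ i < p.length, G.Adj u (p.getVert (i + 1)) ∧ G.Adj (p.getVert i) v := by
  set A := {i ∈ range (p.length + 1) | G.Adj u (p.getVert i)}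
  set B := {i ∈ range (p.length + 1) | G.Adj v (p.getVert i)}.map (addRightEmbedding 1)
  have hA : A ⊆ Icc 1 p.length := by
    intro i hi
    simp only [A, mem_filter, mem_range, mem_Icc] at hi ⊢
    refine ⟨Nat.one_le_iff_ne_zero.mpr ?_, by omega⟩
    rintro rfl
    simp at hi
  have hB : B ⊆ Icc 1 p.length := by
    intro i hi
    simp only [B, mem_map, mem_filter, mem_range, addRightEmbedding_apply, mem_Icc] at hi ⊢
    obtain ⟨j, ⟨hj, hadj⟩, rfl⟩ := hi
    refine ⟨by omega, Nat.lt_iff_add_one_le.mp (lt_of_le_of_ne (by omega) ?_)⟩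
    rintro rfl
    simp at hadj
  have hcard : #(Icc 1 p.length) < #A + #B := by
    rw [card_map, hp.card_filter_adj_getVert, hp.card_filter_adj_getVert, Nat.card_Icc,
      hp.length_eq]
    have := Fintype.card_pos_iff.mpr ⟨u⟩
    omega
  obtain ⟨j, hj⟩ := inter_nonempty_of_card_lt_card_add_card hA hB hcard
  obtain ⟨hjA, hjB⟩ := mem_inter.mp hj
  simp only [A, B, mem_filter, mem_map, mem_range, addRightEmbedding_apply] at hjA hjB
  obtain ⟨i, ⟨hi, hiv⟩, rfl⟩ := hjB
  exact ⟨i, by omega, hjA.2, hiv.symm⟩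

theorem IsHamiltonian.isHamiltonian_of_card_le_degree_add {p : G.Walk u v}
    (hp : p.IsHamiltonian) [DecidableRel G.Adj] (h3 : 3 ≤ Fintype.card V)
    (hdeg : Fintype.card V ≤ G.degree u + G.degree v) : G.IsHamiltonian := by
  obtain ⟨i, hi, hu, hv⟩ := hp.exists_adj_getVert_succ_of_card_le hdeg
  -- the path `u → ⋯ → pᵢ → v → pₙ₋₂ → ⋯ → pᵢ₊₁`, closed by `pᵢ₊₁ ~ u`
  let q : G.Walk u (p.getVert (i + 1)) := (p.take i).append (cons hv (p.drop (i + 1)).reverse)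
  have hperm : q.support.Perm p.support := by
    have hsupp : q.support = p.support.take (i + 1) ++ (p.support.drop (i + 1)).reverse := by
      simp [q, support_append, support_take, drop_support_eq_support_drop_min,
        Nat.min_eq_left (show i + 1 ≤ p.length by omega)]
    rw [hsupp]
    exact ((List.reverse_perm _).append_left _).trans (by rw [List.take_append_drop])
  have hq : q.IsHamiltonian := fun a => (hperm.count_eq a).trans (hp a)
  exact hq.isHamiltonian_of_adj hu.symm h3

end SimpleGraph.Walk

namespace SimpleGraph

variable {V : Type*} {G : SimpleGraph V} {u v : V}

theorem mem_edgeSet_of_mem_edgeSet_sup_edge {e : Sym2 V} (he : e ∈ (G ⊔ edge u v).edgeSet)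
    (hne : e ≠ s(u, v)) : e ∈ G.edgeSet := by
  rw [edgeSet_sup] at he
  refine he.resolve_right fun he' => hne ?_
  by_cases huv : u = v
  · simp [huv] at he'
  · simpa [edgeSet_edge_of_ne huv] using he'

variable [DecidableEq V]

theorem exists_isHamiltonian_of_isHamiltonianCycle_snd_eq {c : (G ⊔ edge u v).Walk u u}
    (hc : c.IsHamiltonianCycle) (hsnd : c.snd = v) : ∃ p : G.Walk v u, p.IsHamiltonian := by
  have hnil := hc.isCycle.not_nil
  have hfirst : s(u, v) ∉ c.tail.edges := by
    have hnd := hc.isCycle.edges_nodup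
    rw [← c.cons_tail_eq hnil, Walk.edges_cons, List.nodup_cons] at hnd
    exact (congrArg (fun x => s(u, x) ∉ c.tail.edges) hsnd).mp hnd.1
  have hG : ∀ e ∈ c.tail.edges, e ∈ G.edgeSet := fun e he =>
    mem_edgeSet_of_mem_edgeSet_sup_edge (c.tail.edges_subset_edgeSet he)
      (ne_of_mem_of_not_mem he hfirst)
  refine ⟨(c.tail.transfer G hG).copy hsnd rfl, fun a => ?_⟩
  rw [Walk.support_copy, Walk.support_transfer]
  exact hc.isHamiltonian_tail a

variable [Fintype V]

theorem isHamiltonian_top (h3 : 3 ≤ Fintype.card V) : (⊤ : SimpleGraph V).IsHamiltonian := by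
  obtain ⟨x⟩ := Fintype.card_pos_iff.mp (show 0 < Fintype.card V by omega)
  have hne : (univ : Finset V).toList ≠ [] := List.ne_nil_of_mem (mem_toList.mpr (mem_univ x))
  have hnd := nodup_toList (univ : Finset V)
  let p := Walk.ofSupport _ hne ((hnd.imp id).isChain (R := (⊤ : SimpleGraph V).Adj))
  have hp : p.IsHamiltonian := fun a => by
    rw [Walk.support_ofSupport]
    exact List.count_eq_one_of_mem hnd (by simp)
  refine hp.isHamiltonian_of_card_le_degree_add h3 ?_
  have hdeg : ∀ y, (⊤ : SimpleGraph V).degree y = Fintype.card V - 1 := complete_graph_degree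
  rw [hdeg, hdeg]
  omega

theorem isHamiltonian_of_isHamiltonianCycle_of_notMem_edges {c : (G ⊔ edge u v).Walk u u}
    (hc : c.IsHamiltonianCycle) (h : s(u, v) ∉ c.edges) : G.IsHamiltonian := by
  have hG : ∀ e ∈ c.edges, e ∈ G.edgeSet := fun e he =>
    mem_edgeSet_of_mem_edgeSet_sup_edge (c.edges_subset_edgeSet he) (ne_of_mem_of_not_mem he h)
  refine fun _ => ⟨u, c.transfer G hG, ?_⟩
  rw [Walk.isHamiltonianCycle_iff_isCycle_and_length_eq, Walk.length_transfer]
  exact ⟨hc.isCycle.transfer hG, hc.length_eq⟩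

theorem exists_isHamiltonian_of_isHamiltonian_sup_edge (hH : (G ⊔ edge u v).IsHamiltonian)
    (hG : ¬G.IsHamiltonian) (huv : u ≠ v) : ∃ p : G.Walk v u, p.IsHamiltonian := by
  have : Nontrivial V := ⟨u, v, huv⟩
  obtain ⟨c, hc⟩ := hH.exists_isHamiltonianCycle u
  by_cases h : s(u, v) ∈ c.edges
  · rcases hc.isCycle.snd_eq_or_penultimate_eq_of_mem_edges h with hsnd | hpen
    · exact exists_isHamiltonian_of_isHamiltonianCycle_snd_eq hc hsnd
    · refine exists_isHamiltonian_of_isHamiltonianCycle_snd_eq (c := c.reverse) ?_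
        (by rw [Walk.snd_reverse, hpen])
      rw [Walk.isHamiltonianCycle_iff_isCycle_and_length_eq, Walk.length_reverse]
      exact ⟨hc.isCycle.reverse, hc.length_eq⟩
  · exact absurd (isHamiltonian_of_isHamiltonianCycle_of_notMem_edges hc h) hG

end SimpleGraph

theorem SaturatedNonhamiltonian.degree_add_degree_lt {V : Type*} [Fintype V] [DecidableEq V]
    {G : SimpleGraph V} [DecidableRel G.Adj] {u v : V}
    (hG : SaturatedNonhamiltonian G) (h3 : 3 ≤ Fintype.card V) (huv : u ≠ v)
    (hadj : ¬G.Adj u v) : G.degree u + G.degree v < Fintype.card V := by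
  obtain ⟨p, hp⟩ :=
    SimpleGraph.exists_isHamiltonian_of_isHamiltonian_sup_edge (hG.2 u v huv hadj) hG.1 huv
  by_contra! h
  exact hG.1 (hp.isHamiltonian_of_card_le_degree_add h3 (by omega))

namespace SimpleGraph

variable {V : Type*} [Fintype V] [DecidableEq V] {G : SimpleGraph V} [DecidableRel G.Adj]

theorem card_cliqueFinset_filter_mem_le (v : V) (k : ℕ) :
    #{K ∈ G.cliqueFinset k | v ∈ K} ≤ (G.degree v).choose (k - 1) := by
  rw [← card_neighborFinset_eq_degree, ← card_powersetCard]
  refine card_le_card_of_injOn (fun K => K.erase v) (fun K hK => ?_)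
    ((erase_injOn' v).mono fun K hK => (mem_filter.mp hK).2)
  obtain ⟨hK, hv⟩ := mem_filter.mp hK
  obtain ⟨hcl, hcard⟩ := mem_cliqueFinset_iff.mp hK
  rw [mem_coe, mem_powersetCard, card_erase_of_mem hv, hcard]
  refine ⟨fun w hw => ?_, rfl⟩
  obtain ⟨hwv, hwK⟩ := mem_erase.mp hw
  exact (mem_neighborFinset _ _ _).mpr (hcl hv hwK hwv.symm)

theorem card_cliqueFinset_le_choose_add_sum (S : Finset V) (k : ℕ) :
    #(G.cliqueFinset k) ≤
      (Fintype.card V - #S).choose k + ∑ v ∈ S, (G.degree v).choose (k - 1) := by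
  have hcover : G.cliqueFinset k ⊆
      Sᶜ.powersetCard k ∪ S.biUnion fun v => {K ∈ G.cliqueFinset k | v ∈ K} := by
    intro K hK
    by_cases h : ∃ v ∈ S, v ∈ K
    · obtain ⟨v, hvS, hvK⟩ := h
      exact mem_union_right _ (mem_biUnion.mpr ⟨v, hvS, mem_filter.mpr ⟨hK, hvK⟩⟩)
    · push Not at h
      exact mem_union_left _ <| mem_powersetCard.mpr
        ⟨fun w hw => mem_compl.mpr fun hwS => h w hwS hw, (mem_cliqueFinset_iff.mp hK).2⟩
  calc #(G.cliqueFinset k)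
      ≤ #(Sᶜ.powersetCard k) + #(S.biUnion fun v => {K ∈ G.cliqueFinset k | v ∈ K}) :=
        (card_le_card hcover).trans (card_union_le _ _)
    _ ≤ _ := by
      rw [card_powersetCard, card_compl]
      exact Nat.add_le_add_left (card_biUnion_le.trans
        (sum_le_sum fun v _ => G.card_cliqueFinset_filter_mem_le v k)) _

theorem card_le_of_lt_card_cliqueFinset {D : Finset V} {m k : ℕ} (hk : 1 ≤ k)
    (hm : 2 * m + 1 ≤ Fintype.card V) (hdeg : ∀ v ∈ D, G.degree v ≤ m)
    (hcl : (Fintype.card V - m).choose k + m * m.choose (k - 1) < #(G.cliqueFinset k)) :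
    #D ≤ m := by
  by_contra! hD
  obtain ⟨S, hSD, hS⟩ := exists_subset_card_eq (show m + 1 ≤ #D by omega)
  have hbound := G.card_cliqueFinset_le_choose_add_sum S k
  have hsum : ∑ v ∈ S, (G.degree v).choose (k - 1) ≤ (m + 1) * m.choose (k - 1) := by
    simpa [hS] using sum_le_card_nsmul S _ _ fun v hv => Nat.choose_le_choose _ (hdeg v (hSD hv))
  rw [hS] at hbound
  rw [Nat.succ_mul] at hsum
  set N := Fintype.card V
  have hpascal : (N - m).choose k = (N - (m + 1)).choose k + (N - (m + 1)).choose (k - 1) := by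
    obtain ⟨j, rfl⟩ : ∃ j, k = j + 1 := ⟨k - 1, by omega⟩
    rw [show N - m = N - (m + 1) + 1 by omega, Nat.choose_succ_succ', add_comm]
    rfl
  have hmono : m.choose (k - 1) ≤ (N - (m + 1)).choose (k - 1) :=
    Nat.choose_le_choose _ (by omega)
  omega

theorem isClique_compl_filter_degree_le {m : ℕ}
    (hore : ∀ u v, u ≠ v → ¬G.Adj u v → G.degree u + G.degree v < Fintype.card V)
    (hm : Fintype.card V ≤ 2 * m + 2) :
    G.IsClique (↑({v | G.degree v ≤ m} : Finset V)ᶜ : Set V) := by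
  intro u hu v hv huv
  by_contra hadj
  have hu' : m < G.degree u := by simpa using hu
  have hv' : m < G.degree v := by simpa using hv
  have := hore u v huv hadj
  omega

theorem degree_le_card_of_isClique_compl {D : Finset V}
    (hore : ∀ u v, u ≠ v → ¬G.Adj u v → G.degree u + G.degree v < Fintype.card V)
    (hD : G.IsClique (↑Dᶜ : Set V)) {v : V} (hv : v ∈ D)
    (hdeg : G.degree v + #D < Fintype.card V) : G.degree v ≤ #D := by
  obtain ⟨u, hu, hadj⟩ : ∃ u ∈ Dᶜ, ¬G.Adj v u := by
    by_contra! h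
    have hsub : Dᶜ ⊆ G.neighborFinset v := fun u hu => (G.mem_neighborFinset v u).mpr (h u hu)
    have := card_le_card hsub
    rw [card_compl, card_neighborFinset_eq_degree] at this
    omega
  have huv : u ≠ v := fun h => mem_compl.mp hu (h ▸ hv)
  have hu_deg : #(Dᶜ.erase u) ≤ G.degree u := by
    rw [← card_neighborFinset_eq_degree]
    refine card_le_card fun w hw => ?_
    obtain ⟨hwu, hw⟩ := mem_erase.mp hw
    exact (mem_neighborFinset _ _ _).mpr (hD (by simpa using hu) (by simpa using hw) hwu.symm)
  rw [card_erase_of_mem hu, card_compl] at hu_deg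
  have := hore u v huv fun h => hadj h.symm
  omega

end SimpleGraph

open SimpleGraph in
theorem saturated_structure (n k : ℕ) (hk : 2 ≤ k) (G : SimpleGraph (Fin n))
    [DecidableRel G.Adj] (hG : SaturatedNonhamiltonian G)
    (hcliques : (G.cliqueFinset k).card >
      (n - (n - 1) / 2).choose k + ((n - 1) / 2) * ((n - 1) / 2).choose (k - 1)) :
    ∃ r : ℕ, 1 ≤ r ∧ r ≤ (n - 1) / 2 ∧
      ∃ D : Finset (Fin n), D.card = r ∧ (∀ v ∈ D, G.degree v ≤ r) ∧
        (∀ u v : Fin n, u ∉ D → v ∉ D → u ≠ v → G.Adj u v) := by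
  set m := (n - 1) / 2
  have hcard : Fintype.card (Fin n) = n := Fintype.card_fin n
  have h3 : 3 ≤ n := by
    by_contra! h
    have hm : m = 0 := by omega
    have := G.card_cliqueFinset_le (n := k)
    rw [hcard] at this
    simp only [hm, Nat.sub_zero, zero_mul, add_zero] at hcliques
    omega
  have hore : ∀ u v, u ≠ v → ¬G.Adj u v → G.degree u + G.degree v < Fintype.card (Fin n) :=
    fun u v => hG.degree_add_degree_lt (by omega)
  set D : Finset (Fin n) := {v | G.degree v ≤ m}
  have hclique : G.IsClique (↑Dᶜ : Set (Fin n)) :=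
    isClique_compl_filter_degree_le (m := m) hore (by omega)
  have hDm : #D ≤ m := card_le_of_lt_card_cliqueFinset (m := m) (k := k) (by omega) (by omega)
    (fun v hv => (mem_filter.mp hv).2) (by rwa [hcard])
  have hD : D.Nonempty := by
    rw [nonempty_iff_ne_empty]
    intro hD
    rw [hD, compl_empty, coe_univ, isClique_univ] at hclique
    exact hG.1 (hclique ▸ isHamiltonian_top (by omega))
  refine ⟨#D, hD.card_pos, hDm, D, rfl, fun v hv => ?_,
    fun u v hu hv huv => hclique (by simpa using hu) (by simpa using hv) huv⟩
  exact degree_le_card_of_isClique_compl hore hclique hv (by have := (mem_filter.mp hv).2; omega)
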